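/- For a point (a₀,a₁,a₂,a₃,a₄) ∈ ℂ⁵, every σ-invariant polynomial p ∈ ℂ[x₀,x₁,x₂,x₃,x₄] with zero constant term vanishes at (a₀,a₁,a₂,a₃,a₄) if and only if a₀ = 0, a₁ = 0 and a₂ = 0. -/

import Mathlib

/-
The polynomials `x₀`, `x₀x₂ - x₁²` and `x₀x₄ - 4x₁x₃ + 3x₂²` are `σ`-invariant without
constant term; their joint vanishing forces `a₀ = a₁ = a₂ = 0`. Conversely, with
`c(s) = (0, us², -⅔us, vs/4, 0)` one has `σ_{1/s} c(s) = (0, us², ⁴⁄₃us, u + vs/4, v)`, so an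
invariant polynomial takes the same value at both points; letting `s → 0` it takes the same value
at `(0,0,0,u,v)` as at `0`.
-/

open MvPolynomial

/-- The `ℂ`-algebra endomorphism of `ℂ[x₀,x₁,x₂,x₃,x₄]` given by `σ_t(x₀) = x₀`,
`σ_t(x₁) = x₁ + t·x₀`, `σ_t(x₂) = x₂ + 2t·x₁ + t²·x₀`,
`σ_t(x₃) = x₃ + 3t·x₂ + 3t²·x₁ + t³·x₀`,
`σ_t(x₄) = x₄ + 4t·x₃ + 6t²·x₂ + 4t³·x₁ + t⁴·x₀` (the `ℂ⁺`-action on `Sym⁴(ℂ²)`). -/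
noncomputable def sigma (t : ℂ) :
    MvPolynomial (Fin 5) ℂ →ₐ[ℂ] MvPolynomial (Fin 5) ℂ :=
  aeval ![X 0,
          X 1 + C t * X 0,
          X 2 + C (2 * t) * X 1 + C (t ^ 2) * X 0,
          X 3 + C (3 * t) * X 2 + C (3 * t ^ 2) * X 1 + C (t ^ 3) * X 0,
          X 4 + C (4 * t) * X 3 + C (6 * t ^ 2) * X 2 + C (4 * t ^ 3) * X 1 + C (t ^ 4) * X 0]

def IsSigmaInvariant (p : MvPolynomial (Fin 5) ℂ) : Prop :=
  ∀ t : ℂ, sigma t p = p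

def sigmaPt (t : ℂ) (b : Fin 5 → ℂ) : Fin 5 → ℂ :=
  ![b 0, b 1 + t * b 0, b 2 + 2 * t * b 1 + t ^ 2 * b 0,
    b 3 + 3 * t * b 2 + 3 * t ^ 2 * b 1 + t ^ 3 * b 0,
    b 4 + 4 * t * b 3 + 6 * t ^ 2 * b 2 + 4 * t ^ 3 * b 1 + t ^ 4 * b 0]

theorem eval_sigma (t : ℂ) (b : Fin 5 → ℂ) (p : MvPolynomial (Fin 5) ℂ) :
    eval b (sigma t p) = eval (sigmaPt t b) p := by
  rw [sigma, ← aeval_eq_eval, ← aeval_eq_eval, comp_aeval_apply]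
  congr 1
  ext i
  fin_cases i <;> simp [sigmaPt]

theorem IsSigmaInvariant.eval_sigmaPt {p : MvPolynomial (Fin 5) ℂ} (hp : IsSigmaInvariant p)
    (t : ℂ) (b : Fin 5 → ℂ) : eval (sigmaPt t b) p = eval b p := by
  rw [← eval_sigma, hp t]

theorem IsSigmaInvariant.eval_eq_of_curves {p : MvPolynomial (Fin 5) ℂ} (hp : IsSigmaInvariant p)
    {c d : ℂ → Fin 5 → ℂ} (hc : Continuous c) (hd : Continuous d)
    (hcd : ∀ s ≠ 0, d s = sigmaPt s⁻¹ (c s)) :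
    eval (d 0) p = eval (c 0) p := by
  have : (fun s => eval (d s) p) = fun s => eval (c s) p :=
    Continuous.ext_on (dense_compl_singleton 0) ((continuous_eval p).comp hd)
      ((continuous_eval p).comp hc) fun s hs => by simp only [hcd s hs, hp.eval_sigmaPt]
  exact congrFun this 0

theorem sigmaPt_inv_curve (u v : ℂ) {s : ℂ} (hs : s ≠ 0) :
    sigmaPt s⁻¹ ![0, u * s ^ 2, -(2 / 3) * u * s, v / 4 * s, 0] =
      ![0, u * s ^ 2, 4 / 3 * u * s, u + v / 4 * s, v] := by
  ext i
  fin_cases i <;> simp [sigmaPt] <;> field_simp <;> ring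

theorem IsSigmaInvariant.eval_eq_constantCoeff {p : MvPolynomial (Fin 5) ℂ}
    (hp : IsSigmaInvariant p) (u v : ℂ) : eval ![0, 0, 0, u, v] p = constantCoeff p := by
  have h := hp.eval_eq_of_curves (c := fun s => ![0, u * s ^ 2, -(2 / 3) * u * s, v / 4 * s, 0])
    (d := fun s => ![0, u * s ^ 2, 4 / 3 * u * s, u + v / 4 * s, v]) (by fun_prop) (by fun_prop)
    fun _ hs => (sigmaPt_inv_curve u v hs).symm
  simp only [ne_eq, OfNat.ofNat_ne_zero, not_false_eq_true, zero_pow, mul_zero, add_zero] at h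
  have hzero : (![0, 0, 0, 0, 0] : Fin 5 → ℂ) = 0 := by
    ext i
    fin_cases i <;> rfl
  rw [h, hzero, eval_zero]

/-- Leading coefficient of the Hessian of the binary quartic `∑ (4 choose i) xᵢ X^(4-i) Y^i`. -/
noncomputable def hessianLead : MvPolynomial (Fin 5) ℂ := X 0 * X 2 - X 1 ^ 2

/-- The classical invariant `I` of the binary quartic `∑ (4 choose i) xᵢ X^(4-i) Y^i`. -/
noncomputable def quarticInvariantI : MvPolynomial (Fin 5) ℂ :=
  X 0 * X 4 - 4 * X 1 * X 3 + 3 * X 2 ^ 2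

theorem isSigmaInvariant_X_zero : IsSigmaInvariant (X 0) := fun t => by simp [sigma]

theorem isSigmaInvariant_hessianLead : IsSigmaInvariant hessianLead := fun t => by
  simp [sigma, hessianLead, C_mul, map_ofNat]; ring

theorem isSigmaInvariant_quarticInvariantI : IsSigmaInvariant quarticInvariantI := fun t => by
  simp [sigma, quarticInvariantI, C_mul, map_ofNat]; ring

/-- Every `σ`-invariant polynomial with zero constant term vanishes at
`(a₀,a₁,a₂,a₃,a₄) ∈ ℂ⁵` if and only if `a₀ = 0`, `a₁ = 0` and `a₂ = 0`. -/
theorem all_invariants_vanish_iff (a : Fin 5 → ℂ) :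
    (∀ p : MvPolynomial (Fin 5) ℂ,
        (∀ t : ℂ, sigma t p = p) → constantCoeff p = 0 → eval a p = 0) ↔
      (a 0 = 0 ∧ a 1 = 0 ∧ a 2 = 0) := by
  constructor
  · intro h
    have h0 : a 0 = 0 := by simpa using h _ isSigmaInvariant_X_zero (by simp)
    have hH : a 0 * a 2 - a 1 ^ 2 = 0 := by
      simpa [hessianLead] using h _ isSigmaInvariant_hessianLead (by simp [hessianLead])
    have hI : a 0 * a 4 - 4 * a 1 * a 3 + 3 * a 2 ^ 2 = 0 := by
      simpa [quarticInvariantI] using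
        h _ isSigmaInvariant_quarticInvariantI (by simp [quarticInvariantI])
    have h1 : a 1 = 0 := pow_eq_zero_iff two_ne_zero |>.mp (by linear_combination a 2 * h0 - hH)
    have h2 : a 2 = 0 := pow_eq_zero_iff two_ne_zero |>.mp
      (by linear_combination (hI - a 4 * h0 + 4 * a 3 * h1) / 3)
    exact ⟨h0, h1, h2⟩
  · rintro ⟨h0, h1, h2⟩ p hp hc
    have ha : a = ![0, 0, 0, a 3, a 4] := by
      ext i
      fin_cases i <;> simp [h0, h1, h2]
    rw [ha, IsSigmaInvariant.eval_eq_constantCoeff hp, hc]
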